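/- arXiv:1804.10081 — 6 statements merged into one kernel-verified Lean document; each statement's English description precedes it below -/
import Mathlib

section
/- For all n ≥ 0, b_{n,λ} = Σ_{k=0}^{n} (-1)^k Σ_{m_1+⋯+m_k=n, m_i≥1} (n choose m_1,…,m_k) · ((λ-1)_{m_1}/(m_1+1)) ⋯ ((λ-1)_{m_k}/(m_k+1)). -/
open PowerSeries Finset

/-- Coefficient of a power of a power series as a sum over antidiagonal tuples. -/
lemma coeff_pow_tuple (g : PowerSeries ℝ) : ∀ (k n : ℕ),
    PowerSeries.coeff n (g ^ k) =
      ∑ m ∈ Finset.Nat.antidiagonalTuple k n, ∏ i, PowerSeries.coeff (m i) g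
  | 0, n => by
    cases n with
    | zero => simp [Finset.Nat.antidiagonalTuple_zero_zero]
    | succ n => simp [Finset.Nat.antidiagonalTuple_zero_succ]
  | (k + 1), n => by
    rw [pow_succ', PowerSeries.coeff_mul]
    simp_rw [coeff_pow_tuple g k, Finset.mul_sum]
    rw [Finset.sum_sigma']
    refine Finset.sum_nbij' (fun x => Fin.cons x.1.1 x.2)
      (fun m => ⟨(m 0, n - m 0), Fin.tail m⟩) ?_ ?_ ?_ ?_ ?_
    · rintro ⟨⟨p, q⟩, m⟩ hx
      simp only [Finset.mem_sigma, Finset.Nat.mem_antidiagonalTuple,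
        Finset.HasAntidiagonal.mem_antidiagonal] at hx ⊢
      rw [Fin.sum_cons, hx.2, hx.1]
    · intro m hm
      simp only [Finset.Nat.mem_antidiagonalTuple] at hm
      have h := Fin.sum_univ_succ m
      have h0 : m 0 ≤ n := by
        rw [← hm]; exact Finset.single_le_sum (f := m) (fun i _ => Nat.zero_le _)
          (Finset.mem_univ 0)
      simp only [Finset.mem_sigma, Finset.Nat.mem_antidiagonalTuple,
        Finset.HasAntidiagonal.mem_antidiagonal]
      refine ⟨by omega, ?_⟩
      show ∑ i : Fin k, m i.succ = n - m 0
      omega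
    · rintro ⟨⟨p, q⟩, m⟩ hx
      simp only [Finset.mem_sigma, Finset.Nat.mem_antidiagonalTuple,
        Finset.HasAntidiagonal.mem_antidiagonal] at hx
      obtain ⟨h1, h2⟩ := hx
      simp only [Fin.cons_zero, Fin.tail_cons]
      have : n - p = q := by omega
      rw [this]
    · intro m hm
      simp [Fin.cons_self_tail]
    · rintro ⟨⟨p, q⟩, m⟩ hx
      simp [Fin.prod_univ_succ]

/-- The formal binomial series `(1+t)^λ`. -/
noncomputable def binomSeries (lam : ℝ) : PowerSeries ℝ :=
  PowerSeries.mk fun n => (descPochhammer ℝ n).eval lam / n.factorial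

/-- For all `n ≥ 0`,
`b_{n,λ} = Σ_{k=0}^n (-1)^k Σ_{m_1+⋯+m_k=n, m_i ≥ 1} (n choose m_1,…,m_k)
  ((λ-1)_{m_1}/(m_1+1)) ⋯ ((λ-1)_{m_k}/(m_k+1))`. -/
theorem stmt3 (lam : ℝ) (hlam : lam ≠ 0) (b : ℕ → ℝ)
    (hb : PowerSeries.mk (fun n => b n / n.factorial) * (binomSeries lam - 1)
        = PowerSeries.C lam * PowerSeries.X) :
    ∀ n : ℕ, b n = ∑ k ∈ Finset.range (n + 1), (-1 : ℝ) ^ k *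
      ∑ m ∈ (Finset.Nat.antidiagonalTuple k n).filter (fun m => ∀ i, 1 ≤ m i),
        ((n.factorial : ℝ) / ∏ i, ((m i).factorial : ℝ)) *
          ∏ i, (descPochhammer ℝ (m i)).eval (lam - 1) / ((m i : ℝ) + 1) := by
  intro n
  set B : PowerSeries ℝ := PowerSeries.mk (fun n => b n / n.factorial) with hB
  set g : PowerSeries ℝ := PowerSeries.mk
    (fun m => if m = 0 then 0 else
      (descPochhammer ℝ m).eval (lam - 1) / (m + 1).factorial) with hg
  -- Step 1: binomSeries lam - 1 = C lam * X * (1 + g)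
  have hfact : binomSeries lam - 1 = PowerSeries.C lam * PowerSeries.X * (1 + g) := by
    have : PowerSeries.C lam * PowerSeries.X * (1 + g)
        = PowerSeries.X * (PowerSeries.C lam * (1 + g)) := by ring
    rw [this]
    ext j
    cases j with
    | zero =>
      simp [binomSeries, PowerSeries.coeff_zero_eq_constantCoeff]
    | succ j =>
      rw [PowerSeries.coeff_succ_X_mul]
      simp only [binomSeries, PowerSeries.coeff_mk, map_sub, PowerSeries.coeff_one,
        PowerSeries.coeff_C_mul, map_add, hg]
      cases j with
      | zero =>
        simp [descPochhammer_succ_left]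
      | succ j =>
        have hd : (descPochhammer ℝ (j + 2)).eval lam
            = lam * (descPochhammer ℝ (j + 1)).eval (lam - 1) := by
          rw [descPochhammer_succ_left]
          simp [Polynomial.eval_comp]
        rw [hd]
        norm_num
        rw [mul_div_assoc]
  -- Step 2: B * (1 + g) = 1
  have hXC : (PowerSeries.C lam * PowerSeries.X : PowerSeries ℝ) ≠ 0 := by
    intro h
    have := congrArg (PowerSeries.coeff 1) h
    simp [hlam] at this
  have hB1 : B * (1 + g) = 1 := by
    rw [hfact] at hb
    have h2 : (PowerSeries.C lam * PowerSeries.X) * (B * (1 + g))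
        = B * (PowerSeries.C lam * PowerSeries.X * (1 + g)) := by ring
    rw [hb] at h2
    exact mul_left_cancel₀ hXC (h2.trans (mul_one _).symm)
  -- Step 3: geometric partial sums
  set S : PowerSeries ℝ := ∑ k ∈ Finset.range (n + 1), (-g) ^ k with hS
  have hgeom : S * (1 + g) = 1 - (-g) ^ (n + 1) := by
    have := geom_sum_mul (-g) (n + 1)
    have h2 : S * (-g - 1) = (-g) ^ (n + 1) - 1 := this
    have : S * (1 + g) = -(S * (-g - 1)) := by ring
    rw [this, h2]; ring
  have hSB : S = B - B * (-g) ^ (n + 1) := by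
    calc S = S * (B * (1 + g)) := by rw [hB1, mul_one]
    _ = B * (S * (1 + g)) := by ring
    _ = B * (1 - (-g) ^ (n + 1)) := by rw [hgeom]
    _ = B - B * (-g) ^ (n + 1) := by ring
  -- coeff n of B * (-g)^(n+1) is zero
  have hg0 : PowerSeries.constantCoeff (-g) = 0 := by
    simp [hg, ← PowerSeries.coeff_zero_eq_constantCoeff]
  have hdvd : (PowerSeries.X : PowerSeries ℝ) ^ (n + 1) ∣ B * (-g) ^ (n + 1) :=
    Dvd.dvd.mul_left (pow_dvd_pow_of_dvd (PowerSeries.X_dvd_iff.mpr hg0) (n + 1)) B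
  have hcoeff0 : PowerSeries.coeff n (B * (-g) ^ (n + 1)) = 0 := by
    exact (PowerSeries.X_pow_dvd_iff.mp hdvd) n (Nat.lt_succ_self n)
  have hcoeffS : PowerSeries.coeff n S = b n / n.factorial := by
    rw [hSB, map_sub, hcoeff0, sub_zero, hB, PowerSeries.coeff_mk]
  -- expand coeff n S
  have hexp : PowerSeries.coeff n S = ∑ k ∈ Finset.range (n + 1), (-1 : ℝ) ^ k *
      ∑ m ∈ Finset.Nat.antidiagonalTuple k n, ∏ i, PowerSeries.coeff (m i) g := by
    rw [hS, map_sum]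
    refine Finset.sum_congr rfl fun k _ => ?_
    have h1 : (-1 : PowerSeries ℝ) = PowerSeries.C (-1) := by simp
    rw [neg_pow, h1, ← map_pow, PowerSeries.coeff_C_mul, coeff_pow_tuple]
  -- final arithmetic
  have key : b n / n.factorial = ∑ k ∈ Finset.range (n + 1), (-1 : ℝ) ^ k *
      ∑ m ∈ Finset.Nat.antidiagonalTuple k n, ∏ i, PowerSeries.coeff (m i) g := by
    rw [← hexp, hcoeffS]
  have hnfac : ((n.factorial : ℝ)) ≠ 0 := by positivity
  have hbn : b n = (n.factorial : ℝ) * ∑ k ∈ Finset.range (n + 1), (-1 : ℝ) ^ k *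
      ∑ m ∈ Finset.Nat.antidiagonalTuple k n, ∏ i, PowerSeries.coeff (m i) g := by
    rw [← key]; field_simp
  rw [hbn, Finset.mul_sum]
  refine Finset.sum_congr rfl fun k _ => ?_
  rw [← mul_assoc, mul_comm (n.factorial : ℝ) ((-1 : ℝ) ^ k), mul_assoc]
  congr 1
  -- restrict to the filtered set
  rw [Finset.mul_sum]
  rw [← Finset.sum_filter_of_ne (p := fun m : Fin k → ℕ => ∀ i, 1 ≤ m i)
    (by
      intro m hm hne i
      by_contra hi
      push_neg at hi
      interval_cases h : (m i)
      · exfalso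
        apply hne
        have : PowerSeries.coeff (m i) g = 0 := by rw [h]; simp [hg]
        rw [Finset.prod_eq_zero (Finset.mem_univ i) this, mul_zero])]
  refine Finset.sum_congr rfl fun m hm => ?_
  simp only [Finset.mem_filter] at hm
  obtain ⟨-, hm1⟩ := hm
  have hcoe : ∀ i, PowerSeries.coeff (m i) g
      = (descPochhammer ℝ (m i)).eval (lam - 1) / ((m i : ℝ) + 1) / ((m i).factorial : ℝ) := by
    intro i
    have hne : m i ≠ 0 := Nat.one_le_iff_ne_zero.mp (hm1 i)
    simp only [hg, PowerSeries.coeff_mk, if_neg hne]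
    rw [Nat.factorial_succ]
    push_cast
    rw [div_div]
  rw [Finset.prod_congr rfl fun i _ => hcoe i]
  rw [Finset.prod_div_distrib]
  have hfi : (∏ i, ((m i).factorial : ℝ)) ≠ 0 := by positivity
  ring
end

section
/- With a_{i,λ}(N) defined by the standard recurrence (a_{0,λ}(1)=λ, a_{1,λ}(1)=1, a_{0,λ}(N+1)=(N+λ)a_{0,λ}(N), a_{N+1,λ}(N+1)=(N+1)a_{N,λ}(N), a_{i,λ}(N+1)=(N+(i+1)λ)a_{i,λ}(N)+i·a_{i-1,λ}(N) for 1≤i≤N), for 1 ≤ i ≤ N-1 one has a_{i,λ}(N) = i!(N+(i+1)λ-1)_{N-i} + i·Σ_{l=0}^{N-i-1} (N+(i+1)λ-1)_l · a_{i-1,λ}(N-l-1). -/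
private lemma desc_succ_eval (n : ℕ) (x : ℝ) :
    (descPochhammer ℝ (n + 1)).eval x = x * (descPochhammer ℝ n).eval (x - 1) := by
  simp [descPochhammer_succ_left, Polynomial.eval_comp]

/-- For `1 ≤ i ≤ N-1`:
`a_{i,λ}(N) = i!(N+(i+1)λ-1)_{N-i} + i Σ_{l=0}^{N-i-1} (N+(i+1)λ-1)_l a_{i-1,λ}(N-l-1)`. -/
theorem stmt9 (lam : ℝ) (a : ℕ → ℕ → ℝ)
    (h1 : a 1 0 = lam) (h2 : a 1 1 = 1)
    (h3 : ∀ N : ℕ, 1 ≤ N → a (N + 1) 0 = ((N : ℝ) + lam) * a N 0)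
    (h4 : ∀ N : ℕ, 1 ≤ N → a (N + 1) (N + 1) = ((N : ℝ) + 1) * a N N)
    (h5 : ∀ N i : ℕ, 1 ≤ N → 1 ≤ i → i ≤ N →
      a (N + 1) i = ((N : ℝ) + ((i : ℝ) + 1) * lam) * a N i + (i : ℝ) * a N (i - 1)) :
    ∀ N i : ℕ, 1 ≤ i → i ≤ N - 1 → 1 ≤ N →
      a N i = (i.factorial : ℝ) *
          (descPochhammer ℝ (N - i)).eval ((N : ℝ) + ((i : ℝ) + 1) * lam - 1)
        + (i : ℝ) * ∑ l ∈ Finset.range (N - i),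
            (descPochhammer ℝ l).eval ((N : ℝ) + ((i : ℝ) + 1) * lam - 1) *
              a (N - l - 1) (i - 1) := by
  have hdiag : ∀ N : ℕ, 1 ≤ N → a N N = N.factorial := by
    intro N hN
    induction N with
    | zero => omega
    | succ n ih =>
      rcases Nat.eq_zero_or_pos n with hn | hn
      · subst hn; simpa using h2
      · rw [h4 n hn, ih hn]
        push_cast [Nat.factorial_succ]
        ring
  have key : ∀ m i : ℕ, 1 ≤ i →
      a (i + m + 1) i = (i.factorial : ℝ) *
          (descPochhammer ℝ (m + 1)).eval (((i + m + 1 : ℕ) : ℝ) + ((i : ℝ) + 1) * lam - 1)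
        + (i : ℝ) * ∑ l ∈ Finset.range (m + 1),
            (descPochhammer ℝ l).eval (((i + m + 1 : ℕ) : ℝ) + ((i : ℝ) + 1) * lam - 1) *
              a (i + m - l) (i - 1) := by
    intro m
    induction m with
    | zero =>
      intro i hi
      rw [h5 i i hi hi le_rfl, hdiag i hi]
      simp only [zero_add, Nat.add_zero, Finset.sum_range_one, desc_succ_eval,
        descPochhammer_zero, Polynomial.eval_one, one_mul, Nat.sub_zero]
      push_cast
      ring
    | succ m ih =>
      intro i hi
      have e1 : i + (m + 1) + 1 = (i + m + 1) + 1 := by omega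
      rw [e1, h5 (i + m + 1) i (by omega) hi (by omega), ih i hi]
      set x : ℝ := ((i + m + 1 + 1 : ℕ) : ℝ) + ((i : ℝ) + 1) * lam - 1 with hxdef
      have hpt : ((i + m + 1 : ℕ) : ℝ) + ((i : ℝ) + 1) * lam - 1 = x - 1 := by
        push_cast [hxdef]; ring
      have hx2 : ((i + m + 1 : ℕ) : ℝ) + ((i : ℝ) + 1) * lam = x := by
        push_cast [hxdef]; ring
      rw [hpt, hx2]
      rw [Finset.sum_range_succ' (fun l =>
        (descPochhammer ℝ l).eval x * a (i + (m + 1) - l) (i - 1)) (m + 1)]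
      have hsub : ∀ l ∈ Finset.range (m + 1),
          (descPochhammer ℝ (l + 1)).eval x * a (i + (m + 1) - (l + 1)) (i - 1)
            = x * ((descPochhammer ℝ l).eval (x - 1) * a (i + m - l) (i - 1)) := by
        intro l hl
        rw [desc_succ_eval, show i + (m + 1) - (l + 1) = i + m - l from by omega]
        ring
      rw [Finset.sum_congr rfl hsub, ← Finset.mul_sum, desc_succ_eval (m + 1) x]
      simp only [descPochhammer_zero, Polynomial.eval_one, one_mul, Nat.sub_zero]
      rw [show i + (m + 1) = i + m + 1 from by omega]
      ring
  intro N i hi hiN hN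
  obtain ⟨m, rfl⟩ : ∃ m, N = i + m + 1 := ⟨N - i - 1, by omega⟩
  have h1' : i + m + 1 - i = m + 1 := by omega
  rw [h1', key m i hi]
  congr 1
  congr 1
  apply Finset.sum_congr rfl
  intro l hl
  congr 2
  omega
end

section
/- For 0 ≤ i ≤ N, the coefficients a_{i,λ}(N) defined by the recurrence (a_{0,λ}(1)=λ, a_{1,λ}(1)=1, a_{0,λ}(N+1)=(N+λ)a_{0,λ}(N), a_{N+1,λ}(N+1)=(N+1)a_{N,λ}(N), a_{i,λ}(N+1)=(N+(i+1)λ)a_{i,λ}(N)+i·a_{i-1,λ}(N) for 1≤i≤N) satisfy the explicit formula a_{i,λ}(N) = (-1)^N λ^{-i} Σ_{k=i}^{N} Σ_{l=0}^{k} (-1)^l C(k,i) C(k,l) (λl)_N, where (x)_N is the falling factorial. -/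
private noncomputable def Tc (lam : ℝ) (N k : ℕ) : ℝ :=
  ∑ l ∈ Finset.range (k + 1),
    (-1 : ℝ) ^ l * (k.choose l : ℝ) * (descPochhammer ℝ N).eval (lam * l)

private noncomputable def Dc (lam : ℝ) (N i : ℕ) : ℝ :=
  ∑ k ∈ Finset.Icc i N, (k.choose i : ℝ) * Tc lam N k

private lemma Vlem (lam : ℝ) (N m : ℕ) :
    ∑ j ∈ Finset.range (m + 1),
        (-1 : ℝ) ^ j * (m.choose j : ℝ) * (descPochhammer ℝ N).eval (lam * (j + 1))
      = Tc lam N m - Tc lam N (m + 1) := by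
  have h1 : Tc lam N (m + 1)
      = (∑ j ∈ Finset.range (m + 1),
          (-1 : ℝ) ^ (j + 1) * ((m.choose j : ℝ) + (m.choose (j + 1) : ℝ)) *
            (descPochhammer ℝ N).eval (lam * (j + 1)))
        + (descPochhammer ℝ N).eval 0 := by
    rw [Tc, Finset.sum_range_succ']
    push_cast [Nat.choose_succ_succ]
    norm_num
  have h2 : Tc lam N m
      = (∑ j ∈ Finset.range (m + 1),
          (-1 : ℝ) ^ (j + 1) * (m.choose (j + 1) : ℝ) *
            (descPochhammer ℝ N).eval (lam * (j + 1)))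
        + (descPochhammer ℝ N).eval 0 := by
    rw [Tc, Finset.sum_range_succ', Finset.sum_range_succ]
    push_cast
    norm_num
  rw [h1, h2, add_sub_add_right_eq_sub, ← Finset.sum_sub_distrib]
  exact Finset.sum_congr rfl fun j _ => by ring

private lemma Ulem (lam : ℝ) (N k : ℕ) :
    ∑ l ∈ Finset.range (k + 1),
        (-1 : ℝ) ^ l * (k.choose l : ℝ) * (l : ℝ) * (descPochhammer ℝ N).eval (lam * l)
      = k * (Tc lam N k - Tc lam N (k - 1)) := by
  cases k with
  | zero => simp
  | succ m =>
    rw [Finset.sum_range_succ']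
    have key : ∀ j ∈ Finset.range (m + 1),
        (-1 : ℝ) ^ (j + 1) * ((m+1).choose (j+1) : ℝ) * ((j + 1 : ℕ) : ℝ) *
          (descPochhammer ℝ N).eval (lam * ((j + 1 : ℕ) : ℝ))
        = (-((m : ℝ) + 1)) * ((-1 : ℝ) ^ j * (m.choose j : ℝ) *
            (descPochhammer ℝ N).eval (lam * ((j : ℝ) + 1))) := by
      intro j _
      have h : ((m : ℝ) + 1) * (m.choose j : ℝ) = ((m+1).choose (j+1) : ℝ) * ((j : ℝ) + 1) := by
        exact_mod_cast Nat.add_one_mul_choose_eq m j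
      push_cast
      linear_combination ((-1 : ℝ) ^ j * (descPochhammer ℝ N).eval (lam * ((j : ℝ) + 1))) * h
    rw [Finset.sum_congr rfl key, ← Finset.mul_sum, Vlem]
    push_cast
    ring

private lemma Tsucc (lam : ℝ) (N k : ℕ) :
    Tc lam (N + 1) k = (lam * k - N) * Tc lam N k - lam * k * Tc lam N (k - 1) := by
  have h : Tc lam (N + 1) k
      = ∑ l ∈ Finset.range (k + 1),
          (lam * ((-1 : ℝ) ^ l * (k.choose l : ℝ) * (l : ℝ) * (descPochhammer ℝ N).eval (lam * l))
           - (N : ℝ) * ((-1 : ℝ) ^ l * (k.choose l : ℝ) * (descPochhammer ℝ N).eval (lam * l))) := by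
    rw [Tc]
    refine Finset.sum_congr rfl fun l _ => ?_
    rw [descPochhammer_succ_right, Polynomial.eval_mul, Polynomial.eval_sub,
      Polynomial.eval_X, Polynomial.eval_natCast]
    ring
  rw [h, Finset.sum_sub_distrib, ← Finset.mul_sum, ← Finset.mul_sum, Ulem]
  simp only [Tc]
  ring

private lemma Tvanish (lam : ℝ) : ∀ N k : ℕ, N < k → Tc lam N k = 0 := by
  intro N
  induction N with
  | zero =>
    intro k hk
    rw [Tc]
    have h : ∀ l ∈ Finset.range (k + 1),
        (-1 : ℝ) ^ l * (k.choose l : ℝ) * (descPochhammer ℝ 0).eval (lam * l)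
          = (-1 : ℝ) ^ l * (k.choose l : ℝ) := by
      intro l _
      simp [descPochhammer_zero]
    rw [Finset.sum_congr rfl h]
    have h2 := Int.alternating_sum_range_choose (n := k)
    have hk0 : k ≠ 0 := by omega
    rw [if_neg hk0] at h2
    exact_mod_cast congrArg (fun z : ℤ => (z : ℝ)) h2
  | succ N ih =>
    intro k hk
    rw [Tsucc, ih k (by omega), ih (k - 1) (by omega)]
    ring

private lemma DrecA (lam : ℝ) (N : ℕ) :
    Dc lam (N + 1) 0 = -((N : ℝ) + lam) * Dc lam N 0 := by
  simp only [Dc, Nat.choose_zero_right, Nat.cast_one, one_mul]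
  have hA : ∑ k ∈ Finset.Icc 0 (N + 1), Tc lam (N + 1) k
      = (∑ k ∈ Finset.Icc 0 (N + 1), (lam * k - N) * Tc lam N k)
        - ∑ k ∈ Finset.Icc 0 (N + 1), lam * k * Tc lam N (k - 1) := by
    rw [← Finset.sum_sub_distrib]
    exact Finset.sum_congr rfl fun k _ => by rw [Tsucc]
  have hS1 : ∑ k ∈ Finset.Icc 0 (N + 1), (lam * k - N) * Tc lam N k
      = ∑ k ∈ Finset.Icc 0 N, (lam * k - N) * Tc lam N k := by
    rw [Finset.sum_Icc_succ_top (by omega), Tvanish lam N (N + 1) (by omega)]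
    ring
  have hS2 : ∑ k ∈ Finset.Icc 0 (N + 1), lam * k * Tc lam N (k - 1)
      = ∑ j ∈ Finset.Icc 0 N, lam * ((j : ℝ) + 1) * Tc lam N j := by
    rw [show Finset.Icc 0 (N + 1) = insert 0 (Finset.Icc 1 (N + 1)) from by ext x; simp; omega,
      Finset.sum_insert (by simp), ← Finset.map_add_right_Icc 0 N 1, Finset.sum_map]
    simp only [addRightEmbedding_apply, Nat.add_sub_cancel]
    push_cast
    norm_num
  rw [hA, hS1, hS2, ← Finset.sum_sub_distrib, Finset.mul_sum]
  exact Finset.sum_congr rfl fun k _ => by ring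

private lemma DrecB (lam : ℝ) (N : ℕ) :
    Dc lam (N + 1) (N + 1) = -(lam * ((N : ℝ) + 1)) * Dc lam N N := by
  rw [Dc, Finset.Icc_self, Finset.sum_singleton, Nat.choose_self, Tsucc,
    Tvanish lam N (N + 1) (by omega), Dc, Finset.Icc_self, Finset.sum_singleton,
    Nat.choose_self]
  simp

private lemma DrecC (lam : ℝ) (N i : ℕ) (hi1 : 1 ≤ i) (hiN : i ≤ N) :
    Dc lam (N + 1) i
      = -((N : ℝ) + ((i : ℝ) + 1) * lam) * Dc lam N i - lam * i * Dc lam N (i - 1) := by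
  obtain ⟨i', rfl⟩ : ∃ i', i = i' + 1 := ⟨i - 1, by omega⟩
  have hbin : ∀ j : ℕ, ((j : ℝ) + 1) * ((j + 1).choose (i' + 1) : ℝ)
      = ((j : ℝ) + 1) * (j.choose (i' + 1) : ℝ) + ((i' : ℝ) + 1) * (j.choose (i' + 1) : ℝ)
        + ((i' : ℝ) + 1) * (j.choose i' : ℝ) := by
    intro j
    have h1 : ((j + 1).choose (i' + 1) : ℝ) = (j.choose i' : ℝ) + (j.choose (i' + 1) : ℝ) := by
      exact_mod_cast Nat.choose_succ_succ j i'
    have h2 : ((j : ℝ) + 1) * (j.choose i' : ℝ) = ((j + 1).choose (i' + 1) : ℝ) * ((i' : ℝ) + 1) := by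
      exact_mod_cast Nat.add_one_mul_choose_eq j i'
    linear_combination ((j : ℝ) + 1 + (i' : ℝ) + 1) * h1 + h2
  have hA : Dc lam (N + 1) (i' + 1)
      = (∑ k ∈ Finset.Icc (i' + 1) (N + 1), ((k.choose (i' + 1) : ℝ) * ((lam * k - N) * Tc lam N k)))
        - ∑ k ∈ Finset.Icc (i' + 1) (N + 1), (k.choose (i' + 1) : ℝ) * (lam * k * Tc lam N (k - 1)) := by
    rw [Dc, ← Finset.sum_sub_distrib]
    exact Finset.sum_congr rfl fun k _ => by rw [Tsucc]; ring
  have hS1 : ∑ k ∈ Finset.Icc (i' + 1) (N + 1), ((k.choose (i' + 1) : ℝ) * ((lam * k - N) * Tc lam N k))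
      = ∑ k ∈ Finset.Icc (i' + 1) N, ((k.choose (i' + 1) : ℝ) * ((lam * k - N) * Tc lam N k)) := by
    rw [Finset.sum_Icc_succ_top (by omega), Tvanish lam N (N + 1) (by omega)]
    ring
  have hS2 : ∑ k ∈ Finset.Icc (i' + 1) (N + 1), (k.choose (i' + 1) : ℝ) * (lam * k * Tc lam N (k - 1))
      = ∑ j ∈ Finset.Icc i' N, ((j + 1).choose (i' + 1) : ℝ) * (lam * ((j : ℝ) + 1) * Tc lam N j) := by
    rw [← Finset.map_add_right_Icc i' N 1, Finset.sum_map]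
    refine Finset.sum_congr rfl fun j _ => ?_
    simp only [addRightEmbedding_apply, Nat.add_sub_cancel]
    push_cast
    ring
  have hS2b : ∑ j ∈ Finset.Icc i' N, ((j + 1).choose (i' + 1) : ℝ) * (lam * ((j : ℝ) + 1) * Tc lam N j)
      = (∑ j ∈ Finset.Icc i' N, lam * ((((j : ℝ) + 1) + ((i' : ℝ) + 1)) * (j.choose (i' + 1) : ℝ) * Tc lam N j))
        + lam * ((i' : ℝ) + 1) * ∑ j ∈ Finset.Icc i' N, (j.choose i' : ℝ) * Tc lam N j := by
    rw [Finset.mul_sum, ← Finset.sum_add_distrib]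
    refine Finset.sum_congr rfl fun j _ => ?_
    linear_combination (lam * Tc lam N j) * hbin j
  have hdrop : ∑ j ∈ Finset.Icc i' N, lam * ((((j : ℝ) + 1) + ((i' : ℝ) + 1)) * (j.choose (i' + 1) : ℝ) * Tc lam N j)
      = ∑ j ∈ Finset.Icc (i' + 1) N, lam * ((((j : ℝ) + 1) + ((i' : ℝ) + 1)) * (j.choose (i' + 1) : ℝ) * Tc lam N j) := by
    rw [show Finset.Icc i' N = insert i' (Finset.Icc (i' + 1) N) from by ext x; simp; omega,
      Finset.sum_insert (by simp)]
    simp [Nat.choose_succ_self]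
  have hcomb : (∑ k ∈ Finset.Icc (i' + 1) N, ((k.choose (i' + 1) : ℝ) * ((lam * k - N) * Tc lam N k)))
      - ∑ k ∈ Finset.Icc (i' + 1) N, lam * ((((k : ℝ) + 1) + ((i' : ℝ) + 1)) * (k.choose (i' + 1) : ℝ) * Tc lam N k)
      = -((N : ℝ) + (((i' : ℝ) + 1) + 1) * lam) * ∑ k ∈ Finset.Icc (i' + 1) N, (k.choose (i' + 1) : ℝ) * Tc lam N k := by
    rw [Finset.mul_sum, ← Finset.sum_sub_distrib]
    exact Finset.sum_congr rfl fun k _ => by ring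
  rw [Nat.add_sub_cancel]
  push_cast
  rw [hA, hS1, hS2, hS2b, hdrop, Dc, Dc]
  linear_combination hcomb

private lemma Dbase0 (lam : ℝ) : Dc lam 1 0 = -lam := by
  have h : Finset.Icc 0 1 = {0, 1} := rfl
  simp [Dc, h, Tc, Finset.sum_range_succ, descPochhammer_succ_right, descPochhammer_zero]

private lemma Dbase1 (lam : ℝ) : Dc lam 1 1 = -lam := by
  simp [Dc, Tc, Finset.sum_range_succ, descPochhammer_succ_right, descPochhammer_zero]

/-- Explicit formula:
`a_{i,λ}(N) = (-1)^N λ^{-i} Σ_{k=i}^N Σ_{l=0}^k (-1)^l C(k,i) C(k,l) (λl)_N`. -/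
theorem stmt10 (lam : ℝ) (hlam : lam ≠ 0) (a : ℕ → ℕ → ℝ)
    (h1 : a 1 0 = lam) (h2 : a 1 1 = 1)
    (h3 : ∀ N : ℕ, 1 ≤ N → a (N + 1) 0 = ((N : ℝ) + lam) * a N 0)
    (h4 : ∀ N : ℕ, 1 ≤ N → a (N + 1) (N + 1) = ((N : ℝ) + 1) * a N N)
    (h5 : ∀ N i : ℕ, 1 ≤ N → 1 ≤ i → i ≤ N →
      a (N + 1) i = ((N : ℝ) + ((i : ℝ) + 1) * lam) * a N i + (i : ℝ) * a N (i - 1)) :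
    ∀ N i : ℕ, 1 ≤ N → i ≤ N →
      a N i = (-1 : ℝ) ^ N * lam ^ (-(i : ℤ)) *
        ∑ k ∈ Finset.Icc i N, ∑ l ∈ Finset.range (k + 1),
          (-1 : ℝ) ^ l * (k.choose i) * (k.choose l) *
            (descPochhammer ℝ N).eval (lam * l) := by
  have hbridge : ∀ N i : ℕ,
      (∑ k ∈ Finset.Icc i N, ∑ l ∈ Finset.range (k + 1),
        (-1 : ℝ) ^ l * (k.choose i) * (k.choose l) *
          (descPochhammer ℝ N).eval (lam * l)) = Dc lam N i := by
    intro N i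
    rw [Dc]
    refine Finset.sum_congr rfl fun k _ => ?_
    rw [Tc, Finset.mul_sum]
    exact Finset.sum_congr rfl fun l _ => by ring
  have main : ∀ N : ℕ, 1 ≤ N → ∀ i : ℕ, i ≤ N →
      a N i = (-1 : ℝ) ^ N * lam ^ (-(i : ℤ)) * Dc lam N i := by
    intro N
    induction N with
    | zero => omega
    | succ N ih =>
      intro _ i hi
      rcases Nat.eq_zero_or_pos N with rfl | hN
      · interval_cases i
        · rw [h1, Dbase0]
          norm_num
        · rw [h2, Dbase1]
          norm_num
          field_simp
      · rcases Nat.lt_or_ge i (N + 1) with hiN | hitop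
        · rcases Nat.eq_zero_or_pos i with rfl | hi1
          · rw [h3 N hN, ih hN 0 (by omega), DrecA]
            simp only [Nat.cast_zero, neg_zero, zpow_zero]
            ring
          · rw [h5 N i hN hi1 (by omega), ih hN i (by omega), ih hN (i - 1) (by omega),
              DrecC lam N i hi1 (by omega)]
            have hz : lam ^ (-(i : ℤ)) * lam = lam ^ (-(((i - 1 : ℕ)) : ℤ)) := by
              rw [← zpow_add_one₀ hlam (-(i : ℤ))]
              congr 1
              omega
            rw [← hz]
            ring
        · have hieq : i = N + 1 := by omega
          subst hieq
          rw [h4 N hN, ih hN N (le_refl N), DrecB]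
          have hz : lam ^ (-((N + 1 : ℕ) : ℤ)) * lam = lam ^ (-(N : ℤ)) := by
            rw [← zpow_add_one₀ hlam (-((N + 1 : ℕ) : ℤ))]
            congr 1
            push_cast
            ring
          rw [← hz]
          push_cast
          ring
  intro N i hN hi
  rw [hbridge, main N hN i hi]
end

section
/- For n ≥ k ≥ 0, the exponential partial Bell polynomial evaluated at the generalized falling factorials satisfies B_{n,k}((1)_{1,λ}, (1)_{2,λ}, …, (1)_{n-k+1,λ}) = ((-1)^k/k!) Σ_{l=0}^{k} (-1)^l C(k,l) (l)_{n,λ} = S_{2,λ}(n,k). -/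
/-- The generalized falling factorial `(x)_{n,λ} = x(x-λ)⋯(x-(n-1)λ)`. -/
noncomputable def genFall (x : ℝ) (n : ℕ) (lam : ℝ) : ℝ :=
  ∏ j ∈ Finset.range n, (x - j * lam)

lemma genFall_zero (x lam : ℝ) : genFall x 0 lam = 1 := by simp [genFall]

lemma genFall_succ (x lam : ℝ) (n : ℕ) :
    genFall x (n + 1) lam = genFall x n lam * (x - n * lam) := Finset.prod_range_succ _ _

lemma genFall_nat_zero (lam : ℝ) (n : ℕ) (hn : 0 < n) : genFall 0 n lam = 0 := by
  obtain ⟨m, rfl⟩ := Nat.exists_eq_add_of_lt hn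
  simp only [genFall]
  apply Finset.prod_eq_zero (i := 0) (by simp)
  simp

lemma genFall_vandermonde (x y lam : ℝ) (n : ℕ) :
    genFall (x + y) n lam =
      ∑ j ∈ Finset.range (n + 1),
        (n.choose j : ℝ) * genFall x j lam * genFall y (n - j) lam := by
  induction n with
  | zero => simp [genFall]
  | succ n ih =>
    rw [genFall_succ, ih, Finset.sum_mul]
    have key : ∀ j ∈ Finset.range (n + 1),
        (n.choose j : ℝ) * genFall x j lam * genFall y (n - j) lam * (x + y - n * lam)
        = (n.choose j : ℝ) * genFall x (j + 1) lam * genFall y (n - j) lam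
          + (n.choose j : ℝ) * genFall x j lam * genFall y (n - j + 1) lam := by
      intro j hj
      rw [Finset.mem_range, Nat.lt_succ_iff] at hj
      have hc : ((n - j : ℕ) : ℝ) = (n : ℝ) - j := by
        rw [Nat.cast_sub hj]
      rw [genFall_succ, genFall_succ]
      have h2 : (x + y - n * lam) = (x - j * lam) + (y - ((n - j : ℕ) : ℝ) * lam) := by
        rw [hc]; ring
      rw [h2]; ring
    rw [Finset.sum_congr rfl key, Finset.sum_add_distrib]
    -- S1 + S2 = T
    rw [Finset.sum_range_succ' (fun j => ((n+1).choose j : ℝ) * genFall x j lam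
        * genFall y (n + 1 - j) lam) (n + 1)]
    have hA : ∀ j ∈ Finset.range (n + 1),
        (((n+1).choose (j+1) : ℕ) : ℝ) * genFall x (j+1) lam * genFall y (n + 1 - (j+1)) lam
        = (n.choose j : ℝ) * genFall x (j+1) lam * genFall y (n - j) lam
          + (n.choose (j+1) : ℝ) * genFall x (j+1) lam * genFall y (n - j) lam := by
      intro j hj
      have : n + 1 - (j + 1) = n - j := by omega
      rw [this, Nat.choose_succ_succ]
      push_cast
      ring
    rw [Finset.sum_congr rfl hA, Finset.sum_add_distrib]
    -- now: S1 + S2 = (S1' + S2') + first-term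
    have hS2 : ∑ j ∈ Finset.range (n + 1),
        (n.choose j : ℝ) * genFall x j lam * genFall y (n - j + 1) lam
        = (∑ j ∈ Finset.range (n + 1),
            (n.choose (j+1) : ℝ) * genFall x (j+1) lam * genFall y (n - j) lam)
          + (((n+1).choose 0 : ℕ) : ℝ) * genFall x 0 lam * genFall y (n + 1 - 0) lam := by
      rw [Finset.sum_range_succ' (fun j => (n.choose j : ℝ) * genFall x j lam
          * genFall y (n - j + 1) lam) n]
      rw [Finset.sum_range_succ (fun j => (n.choose (j+1) : ℝ) * genFall x (j+1) lam
          * genFall y (n - j) lam) n]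
      have hlast : (n.choose (n+1) : ℝ) = 0 := by
        rw [Nat.choose_succ_self]; norm_num
      rw [hlast]
      simp only [Nat.choose_zero_right, Nat.cast_one, genFall_zero, Nat.sub_zero, zero_mul,
        mul_zero, add_zero]
      congr 1
      apply Finset.sum_congr rfl
      intro j hj
      rw [Finset.mem_range] at hj
      have : n - (j + 1) + 1 = n - j := by omega
      rw [this]
    rw [hS2]
    ring

noncomputable def Elam (lam x : ℝ) : PowerSeries ℝ :=
  PowerSeries.mk fun n => genFall x n lam / n.factorial

lemma Elam_coeff (lam x : ℝ) (n : ℕ) :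
    PowerSeries.coeff n (Elam lam x) = genFall x n lam / n.factorial :=
  PowerSeries.coeff_mk _ _

lemma Elam_mul (lam x y : ℝ) : Elam lam x * Elam lam y = Elam lam (x + y) := by
  ext n
  rw [PowerSeries.coeff_mul, Elam_coeff, genFall_vandermonde,
    Finset.Nat.sum_antidiagonal_eq_sum_range_succ_mk]
  rw [Finset.sum_div]
  apply Finset.sum_congr rfl
  intro j hj
  rw [Finset.mem_range, Nat.lt_succ_iff] at hj
  rw [Elam_coeff, Elam_coeff]
  have hfac : ((n.choose j : ℝ) * j.factorial * (n - j).factorial) = n.factorial := by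
    rw [← Nat.cast_mul, ← Nat.cast_mul, Nat.choose_mul_factorial_mul_factorial hj]
  have h1 : (j.factorial : ℝ) ≠ 0 := Nat.cast_ne_zero.mpr (Nat.factorial_ne_zero _)
  have h2 : ((n - j).factorial : ℝ) ≠ 0 := Nat.cast_ne_zero.mpr (Nat.factorial_ne_zero _)
  have h3 : (n.factorial : ℝ) ≠ 0 := Nat.cast_ne_zero.mpr (Nat.factorial_ne_zero _)
  field_simp
  rw [← hfac]
  ring

lemma Elam_zero (lam : ℝ) : Elam lam 0 = 1 := by
  ext n
  rw [Elam_coeff, PowerSeries.coeff_one]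
  cases n with
  | zero => simp [genFall_zero]
  | succ m => simp [genFall_nat_zero lam (m+1) (Nat.succ_pos m)]

lemma Elam_pow (lam : ℝ) (l : ℕ) : (Elam lam 1) ^ l = Elam lam l := by
  induction l with
  | zero => simpa using (Elam_zero lam).symm
  | succ l ih =>
    rw [pow_succ, ih, Elam_mul]
    push_cast
    ring_nf

/-- The degenerate Stirling numbers of the second kind, via their generating function:
`S_{2,λ}(n,k)` is the coefficient in `(1/k!)((1+λt)^{1/λ}-1)^k = Σ_{n≥k} S_{2,λ}(n,k) t^n/n!`;
explicitly `S_{2,λ}(n,k) = ((-1)^k/k!) Σ_{l=0}^k (-1)^l C(k,l)(l)_{n,λ}`. -/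
noncomputable def degStirling2 (lam : ℝ) (n k : ℕ) : ℝ :=
  ((-1 : ℝ) ^ k / k.factorial) *
    ∑ l ∈ Finset.range (k + 1), (-1 : ℝ) ^ l * (k.choose l) * genFall l n lam

/-- The exponential partial Bell polynomial `B_{n,k}(x₁,x₂,…)`, defined via its generating
function `(1/k!)(Σ_{i≥1} x_i t^i/i!)^k = Σ_{n≥k} B_{n,k}(x₁,…,x_{n-k+1}) t^n/n!`. -/
noncomputable def partialBell (n k : ℕ) (x : ℕ → ℝ) : ℝ :=
  (n.factorial : ℝ) * PowerSeries.coeff n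
    (((k.factorial : ℝ))⁻¹ •
      (PowerSeries.mk fun i => if i = 0 then 0 else x i / i.factorial) ^ k)

/-- For `n ≥ k ≥ 0`:
`B_{n,k}((1)_{1,λ},…,(1)_{n-k+1,λ}) = ((-1)^k/k!) Σ_{l=0}^k (-1)^l C(k,l)(l)_{n,λ}
  = S_{2,λ}(n,k)`. -/
theorem stmt12 (lam : ℝ) (n k : ℕ) (hkn : k ≤ n) :
    partialBell n k (fun i => genFall 1 i lam) =
        ((-1 : ℝ) ^ k / k.factorial) *
          ∑ l ∈ Finset.range (k + 1), (-1 : ℝ) ^ l * (k.choose l) * genFall l n lam ∧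
      partialBell n k (fun i => genFall 1 i lam) = degStirling2 lam n k := by
  have hmain : partialBell n k (fun i => genFall 1 i lam) =
      ((-1 : ℝ) ^ k / k.factorial) *
        ∑ l ∈ Finset.range (k + 1), (-1 : ℝ) ^ l * (k.choose l) * genFall l n lam := by
    have hF : (PowerSeries.mk fun i => if i = 0 then 0 else genFall 1 i lam / i.factorial)
        = Elam lam 1 - 1 := by
      ext i
      rw [PowerSeries.coeff_mk, map_sub, Elam_coeff, PowerSeries.coeff_one]
      cases i with
      | zero => simp [genFall_zero]
      | succ m => simp
    unfold partialBell
    rw [hF, sub_pow]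
    rw [map_smul, map_sum]
    have hterm : ∀ m ∈ Finset.range (k + 1),
        (PowerSeries.coeff n)
          ((-1 : PowerSeries ℝ) ^ (m + k) * (Elam lam 1) ^ m * (1 : PowerSeries ℝ) ^ (k - m)
            * ((k.choose m : PowerSeries ℝ)))
        = (-1 : ℝ) ^ (m + k) * (k.choose m : ℝ) * (genFall m n lam / n.factorial) := by
      intro m hm
      have : ((-1 : PowerSeries ℝ) ^ (m + k) * (Elam lam 1) ^ m * (1 : PowerSeries ℝ) ^ (k - m)
            * ((k.choose m : PowerSeries ℝ)))
          = ((-1 : ℝ) ^ (m + k) * (k.choose m : ℝ)) • (Elam lam (m : ℝ)) := by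
        rw [Elam_pow, one_pow, mul_one]
        rw [PowerSeries.smul_eq_C_mul]
        push_cast
        simp only [map_mul, map_pow, map_neg, map_one, map_natCast]
        ring
      rw [this, map_smul, Elam_coeff]
      simp [smul_eq_mul]
    rw [Finset.sum_congr rfl hterm]
    rw [smul_eq_mul]
    simp only [Finset.mul_sum]
    apply Finset.sum_congr rfl
    intro m hm
    rw [Finset.mem_range, Nat.lt_succ_iff] at hm
    have hn : (n.factorial : ℝ) ≠ 0 := Nat.cast_ne_zero.mpr (Nat.factorial_ne_zero _)
    have hsign : (-1 : ℝ) ^ (m + k) = (-1 : ℝ) ^ k * (-1 : ℝ) ^ m := by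
      rw [pow_add]; ring
    rw [hsign]
    field_simp
  exact ⟨hmain, by rw [hmain]; rfl⟩
end

section
/- For 0 ≤ i ≤ N, lim_{λ→0} a_{i,λ}(N) = (-1)^N (-1)^i i! S_1(N,i), where a_{i,λ}(N) = (-1)^N λ^{-i} Σ_{k=i}^{N} Σ_{l=0}^{k} (-1)^l C(k,i)C(k,l)(λl)_N and S_1(N,i) is the signed Stirling number of the first kind. -/
/-- The signed Stirling numbers of the first kind, defined by
`(x)_N = Σ_k S_1(N,k) x^k`. -/
noncomputable def stirling1 (N k : ℕ) : ℝ :=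
  (descPochhammer ℝ N).coeff k

open Finset fwdDiff

private lemma fwdDiff_pow_aux (j : ℕ) :
    fwdDiff (1:ℝ) (fun x : ℝ => x ^ j)
      = ∑ t ∈ Finset.range j, (j.choose t : ℝ) • (fun x : ℝ => x ^ t) := by
  funext x
  have h : (x + 1) ^ j = ∑ t ∈ Finset.range (j + 1), x ^ t * (j.choose t : ℝ) := by
    rw [add_pow]; simp
  simp only [fwdDiff, h, Finset.sum_range_succ, Nat.choose_self, Nat.cast_one, mul_one,
    add_sub_cancel_right, Finset.sum_apply, Pi.smul_apply, smul_eq_mul]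
  exact Finset.sum_congr rfl fun t _ => by ring

private lemma iter_fwdDiff_pow_zero : ∀ j k : ℕ, j < k →
    (fwdDiff (1:ℝ))^[k] (fun x : ℝ => x ^ j) = fun _ => 0 := by
  intro j
  induction j using Nat.strong_induction_on with
  | _ j IH =>
    intro k hk
    obtain ⟨k', rfl⟩ : ∃ k', k = k' + 1 := ⟨k - 1, by omega⟩
    rw [Function.iterate_succ_apply, fwdDiff_pow_aux, fwdDiff_iter_finset_sum]
    funext x
    simp only [Finset.sum_apply]
    refine Finset.sum_eq_zero fun t ht => ?_
    rw [fwdDiff_iter_const_smul, IH t (Finset.mem_range.mp ht) k' (by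
      have := Finset.mem_range.mp ht; omega)]
    simp

private lemma iter_fwdDiff_pow_self : ∀ j : ℕ,
    (fwdDiff (1:ℝ))^[j] (fun x : ℝ => x ^ j) = fun _ => (j.factorial : ℝ) := by
  intro j
  induction j with
  | zero => funext x; simp
  | succ j IH =>
    rw [Function.iterate_succ_apply, fwdDiff_pow_aux, fwdDiff_iter_finset_sum,
      Finset.sum_range_succ]
    funext x
    simp only [Finset.sum_apply, Pi.add_apply]
    have hz : ∑ t ∈ Finset.range j,
        ((fwdDiff (1:ℝ))^[j] ((((j+1).choose t : ℕ) : ℝ) • fun x : ℝ => x ^ t)) x = 0 := by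
      refine Finset.sum_eq_zero fun t ht => ?_
      rw [fwdDiff_iter_const_smul, iter_fwdDiff_pow_zero t j (Finset.mem_range.mp ht)]
      simp
    rw [hz, zero_add, fwdDiff_iter_const_smul, IH]
    simp [Nat.choose_succ_self_right, Nat.factorial_succ]

/-- The alternating binomial sum as a forward difference. -/
private lemma alt_sum_eq (k j : ℕ) :
    ∑ l ∈ Finset.range (k + 1), (-1 : ℝ) ^ l * (k.choose l : ℝ) * (l : ℝ) ^ j
      = (-1 : ℝ) ^ k * ((fwdDiff (1:ℝ))^[k] (fun x : ℝ => x ^ j) 0) := by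
  rw [fwdDiff_iter_eq_sum_shift, Finset.mul_sum]
  refine Finset.sum_congr rfl fun l hl => ?_
  have hlk : l ≤ k := by have := Finset.mem_range.mp hl; omega
  have hsign : (-1 : ℝ) ^ (k - l) * (-1 : ℝ) ^ l = (-1 : ℝ) ^ k := by
    rw [← pow_add]; congr 1; omega
  have : ((-1 : ℤ) ^ (k - l) * (k.choose l : ℤ)) • ((0 : ℝ) + l • (1:ℝ)) ^ j
      = (-1 : ℝ) ^ (k - l) * (k.choose l : ℝ) * (l : ℝ) ^ j := by
    push_cast [zsmul_eq_mul]
    ring_nf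
  rw [this]
  have h2 : (-1:ℝ)^(k-l) * (-1:ℝ)^(k-l) = 1 := by
    rw [← pow_add, ← two_mul, pow_mul]; simp
  calc (-1:ℝ) ^ l * (k.choose l : ℝ) * (l:ℝ) ^ j
      = ((-1:ℝ)^(k-l) * (-1:ℝ)^(k-l)) * ((-1:ℝ) ^ l * (k.choose l : ℝ) * (l:ℝ) ^ j) := by
        rw [h2, one_mul]
    _ = ((-1:ℝ)^(k-l) * (-1:ℝ)^l) * ((-1:ℝ)^(k-l) * (k.choose l : ℝ) * (l:ℝ) ^ j) := by ring
    _ = (-1:ℝ) ^ k * ((-1:ℝ)^(k-l) * (k.choose l : ℝ) * (l:ℝ) ^ j) := by rw [hsign]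

private lemma alt_sum_lt (k j : ℕ) (h : j < k) :
    ∑ l ∈ Finset.range (k + 1), (-1 : ℝ) ^ l * (k.choose l : ℝ) * (l : ℝ) ^ j = 0 := by
  rw [alt_sum_eq, iter_fwdDiff_pow_zero j k h]
  simp

private lemma alt_sum_self (k : ℕ) :
    ∑ l ∈ Finset.range (k + 1), (-1 : ℝ) ^ l * (k.choose l : ℝ) * (l : ℝ) ^ k
      = (-1 : ℝ) ^ k * k.factorial := by
  rw [alt_sum_eq, iter_fwdDiff_pow_self k]

/-- Coefficient in the λ-expansion. -/
private noncomputable def cc (N i j : ℕ) : ℝ :=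
  stirling1 N j * ∑ k ∈ Finset.Icc i N, (k.choose i : ℝ) *
    ∑ l ∈ Finset.range (k + 1), (-1 : ℝ) ^ l * (k.choose l : ℝ) * (l : ℝ) ^ j

private lemma cc_lt (N i j : ℕ) (h : j < i) : cc N i j = 0 := by
  unfold cc
  rw [Finset.sum_eq_zero, mul_zero]
  intro k hk
  have hik : i ≤ k := (Finset.mem_Icc.mp hk).1
  rw [alt_sum_lt k j (by omega), mul_zero]

private lemma cc_self (N i : ℕ) (hi : i ≤ N) :
    cc N i i = stirling1 N i * ((-1 : ℝ) ^ i * i.factorial) := by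
  unfold cc
  congr 1
  rw [Finset.sum_eq_single i]
  · rw [alt_sum_self, Nat.choose_self]; simp
  · intro k hk hne
    have hik : i ≤ k := (Finset.mem_Icc.mp hk).1
    rw [alt_sum_lt k i (by omega), mul_zero]
  · intro h
    exact absurd (Finset.mem_Icc.mpr ⟨le_refl i, hi⟩) h

private lemma inner_sum_eq (N i : ℕ) (lam : ℝ) :
    (∑ k ∈ Finset.Icc i N, ∑ l ∈ Finset.range (k + 1),
        (-1 : ℝ) ^ l * (k.choose i) * (k.choose l) *
          (descPochhammer ℝ N).eval (lam * l))
      = ∑ j ∈ Finset.range (N + 1), cc N i j * lam ^ j := by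
  have hdeg : (descPochhammer ℝ N).natDegree = N := descPochhammer_natDegree ℝ N
  have heval : ∀ l : ℕ, (descPochhammer ℝ N).eval (lam * l)
      = ∑ j ∈ Finset.range (N + 1), stirling1 N j * (lam ^ j * (l : ℝ) ^ j) := by
    intro l
    rw [Polynomial.eval_eq_sum_range (p := descPochhammer ℝ N) (lam * l), hdeg]
    refine Finset.sum_congr rfl fun j _ => ?_
    rw [mul_pow]; rfl
  calc ∑ k ∈ Finset.Icc i N, ∑ l ∈ Finset.range (k + 1),
        (-1 : ℝ) ^ l * (k.choose i) * (k.choose l) * (descPochhammer ℝ N).eval (lam * l)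
      = ∑ k ∈ Finset.Icc i N, ∑ j ∈ Finset.range (N + 1),
          stirling1 N j * lam ^ j * ((k.choose i : ℝ) *
            ∑ l ∈ Finset.range (k + 1), (-1 : ℝ) ^ l * (k.choose l : ℝ) * (l : ℝ) ^ j) := by
        refine Finset.sum_congr rfl fun k _ => ?_
        calc ∑ l ∈ Finset.range (k + 1),
              (-1 : ℝ) ^ l * (k.choose i) * (k.choose l) * (descPochhammer ℝ N).eval (lam * l)
            = ∑ l ∈ Finset.range (k + 1), ∑ j ∈ Finset.range (N + 1),
                (stirling1 N j * lam ^ j) *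
                  ((-1 : ℝ) ^ l * (k.choose i : ℝ) * (k.choose l : ℝ) * (l : ℝ) ^ j) := by
              refine Finset.sum_congr rfl fun l _ => ?_
              rw [heval l, Finset.mul_sum]
              exact Finset.sum_congr rfl fun j _ => by ring
          _ = _ := by
              rw [Finset.sum_comm]
              refine Finset.sum_congr rfl fun j _ => ?_
              rw [Finset.mul_sum, Finset.mul_sum]
              refine Finset.sum_congr rfl fun l _ => ?_
              ring
    _ = ∑ j ∈ Finset.range (N + 1), cc N i j * lam ^ j := by
        rw [Finset.sum_comm]
        refine Finset.sum_congr rfl fun j _ => ?_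
        unfold cc
        rw [Finset.mul_sum, Finset.sum_mul]
        refine Finset.sum_congr rfl fun k _ => ?_
        ring

/-- For `0 ≤ i ≤ N`, with
`a_{i,λ}(N) = (-1)^N λ^{-i} Σ_{k=i}^N Σ_{l=0}^k (-1)^l C(k,i)C(k,l)(λl)_N`,
one has `lim_{λ→0} a_{i,λ}(N) = (-1)^N (-1)^i i! S_1(N,i)`. -/
theorem stmt15 (N i : ℕ) (hi : i ≤ N) :
    Filter.Tendsto
      (fun lam : ℝ => (-1 : ℝ) ^ N * lam ^ (-(i : ℤ)) *
        ∑ k ∈ Finset.Icc i N, ∑ l ∈ Finset.range (k + 1),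
          (-1 : ℝ) ^ l * (k.choose i) * (k.choose l) *
            (descPochhammer ℝ N).eval (lam * l))
      (nhdsWithin 0 {0}ᶜ)
      (nhds ((-1 : ℝ) ^ N * (-1 : ℝ) ^ i * i.factorial * stirling1 N i)) := by
  set g : ℝ → ℝ := fun lam =>
    (-1 : ℝ) ^ N * ∑ m ∈ Finset.range (N + 1 - i), cc N i (i + m) * lam ^ m with hg
  have hgeq : ∀ lam : ℝ, lam ≠ 0 →
      (-1 : ℝ) ^ N * lam ^ (-(i : ℤ)) *
        (∑ k ∈ Finset.Icc i N, ∑ l ∈ Finset.range (k + 1),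
          (-1 : ℝ) ^ l * (k.choose i) * (k.choose l) *
            (descPochhammer ℝ N).eval (lam * l)) = g lam := by
    intro lam hlam
    rw [inner_sum_eq]
    have hsplit : ∑ j ∈ Finset.range (N + 1), cc N i j * lam ^ j
        = lam ^ i * ∑ m ∈ Finset.range (N + 1 - i), cc N i (i + m) * lam ^ m := by
      conv_lhs => rw [Finset.range_eq_Ico]
      rw [← Finset.sum_Ico_consecutive _ (Nat.zero_le i) (by omega : i ≤ N + 1)]
      have h1 : ∑ j ∈ Finset.Ico 0 i, cc N i j * lam ^ j = 0 :=
        Finset.sum_eq_zero fun j hj => by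
          rw [cc_lt N i j (Finset.mem_Ico.mp hj).2, zero_mul]
      rw [h1, zero_add, Finset.sum_Ico_eq_sum_range, Finset.mul_sum]
      refine Finset.sum_congr rfl fun m _ => ?_
      rw [pow_add]; ring
    rw [hsplit, hg]
    have hinv : lam ^ (-(i : ℤ)) * lam ^ i = 1 := by
      rw [zpow_neg, zpow_natCast, inv_mul_cancel₀ (pow_ne_zero i hlam)]
    calc (-1 : ℝ) ^ N * lam ^ (-(i : ℤ)) *
          (lam ^ i * ∑ m ∈ Finset.range (N + 1 - i), cc N i (i + m) * lam ^ m)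
        = (-1 : ℝ) ^ N * ((lam ^ (-(i : ℤ)) * lam ^ i) *
            ∑ m ∈ Finset.range (N + 1 - i), cc N i (i + m) * lam ^ m) := by ring
      _ = _ := by rw [hinv, one_mul]
  have hg0 : g 0 = (-1 : ℝ) ^ N * (-1 : ℝ) ^ i * i.factorial * stirling1 N i := by
    rw [hg]
    simp only []
    have : ∑ m ∈ Finset.range (N + 1 - i), cc N i (i + m) * (0:ℝ) ^ m = cc N i i := by
      rw [Finset.sum_eq_single 0]
      · simp
      · intro m _ hm; rw [zero_pow hm, mul_zero]
      · intro h; exact absurd (Finset.mem_range.mpr (by omega)) h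
    rw [this, cc_self N i hi]
    ring
  have hcont : Filter.Tendsto g (nhdsWithin 0 {0}ᶜ) (nhds (g 0)) := by
    apply Filter.Tendsto.mono_left _ nhdsWithin_le_nhds
    exact (Continuous.tendsto (by fun_prop) 0)
  rw [hg0] at hcont
  refine Filter.Tendsto.congr' ?_ hcont
  filter_upwards [self_mem_nhdsWithin] with lam hlam
  exact (hgeq lam hlam).symm
end

section
/- For N ≥ 0, the N-th derivative of 1/log(1+t) is given by (1/log(1+t))^{(N)} = (1/(1+t)^N) Σ_{k=0}^{N} (-1)^k k! S_1(N,k) / (log(1+t))^{k+1}, where S_1(N,k) are the signed Stirling numbers of the first kind. -/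
lemma stirling1_rec (N j : ℕ) :
    stirling1 (N+1) (j+1) = stirling1 N j - N * stirling1 N (j+1) := by
  unfold stirling1
  rw [descPochhammer_succ_right, ← Polynomial.C_eq_natCast, Polynomial.coeff_mul_X_sub_C]; ring

lemma stirling1_zero (N : ℕ) :
    stirling1 (N+1) 0 = -(N:ℝ) * stirling1 N 0 := by
  unfold stirling1
  rw [descPochhammer_succ_right, Polynomial.mul_coeff_zero]
  simp [mul_comm]

lemma stirling1_top (N : ℕ) : stirling1 N (N+1) = 0 := by
  unfold stirling1
  apply Polynomial.coeff_eq_zero_of_natDegree_lt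
  simp

lemma sum_id (N : ℕ) (u : ℝ) :
    ∑ j ∈ Finset.range (N+2), (-1:ℝ)^j * j.factorial * stirling1 (N+1) j * u^(j+1)
      = ∑ k ∈ Finset.range (N+1), (-1:ℝ)^k * k.factorial * stirling1 N k *
          (-(N:ℝ) * u^(k+1) - ((k:ℝ)+1) * u^(k+2)) := by
  rw [Finset.sum_range_succ']
  have expand : ∀ j ∈ Finset.range (N+1),
      (-1:ℝ)^(j+1) * (j+1).factorial * stirling1 (N+1) (j+1) * u^(j+1+1)
      = (-1:ℝ)^j * j.factorial * stirling1 N j * (-((j:ℝ)+1) * u^(j+2))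
        + (-(N:ℝ)) * ((-1:ℝ)^(j+1) * (j+1).factorial * stirling1 N (j+1) * u^(j+2)) := by
    intro j _
    rw [stirling1_rec]
    push_cast [Nat.factorial_succ]
    ring
  rw [Finset.sum_congr rfl expand, Finset.sum_add_distrib, ← Finset.mul_sum]
  -- second sum: reindex
  have h2 : ∑ j ∈ Finset.range (N+1), (-1:ℝ)^(j+1) * (j+1).factorial * stirling1 N (j+1) * u^(j+2)
      = (∑ k ∈ Finset.range (N+1), (-1:ℝ)^k * k.factorial * stirling1 N k * u^(k+1))
        - stirling1 N 0 * u := by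
    rw [eq_sub_iff_add_eq]
    rw [Finset.sum_range_succ (fun j => (-1:ℝ)^(j+1) * (j+1).factorial * stirling1 N (j+1) * u^(j+2)), stirling1_top]
    rw [Finset.sum_range_succ' (fun k => (-1:ℝ)^k * k.factorial * stirling1 N k * u^(k+1))]
    simp [stirling1]
  rw [h2, stirling1_zero]
  have expand2 : ∀ k ∈ Finset.range (N+1),
      (-1:ℝ)^k * k.factorial * stirling1 N k * (-(N:ℝ) * u^(k+1) - ((k:ℝ)+1) * u^(k+2))
      = (-1:ℝ)^k * k.factorial * stirling1 N k * (-((k:ℝ)+1) * u^(k+2))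
        + (-(N:ℝ)) * ((-1:ℝ)^k * k.factorial * stirling1 N k * u^(k+1)) := by
    intro k _; ring
  rw [Finset.sum_congr rfl expand2, Finset.sum_add_distrib, ← Finset.mul_sum]
  simp only [Nat.factorial_zero, Nat.cast_one, pow_one]
  ring

lemma hasDerivAt_inv_pow {f : ℝ → ℝ} {f' t : ℝ} (n : ℕ) (hf : HasDerivAt f f' t)
    (h0 : f t ≠ 0) :
    HasDerivAt (fun s => (f s ^ n)⁻¹) (-(n:ℝ) * f' * ((f t)⁻¹)^(n+1)) t := by
  have h := ((hf.fun_pow n).fun_inv (pow_ne_zero n h0))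
  refine h.congr_deriv ?_
  cases n with
  | zero => simp
  | succ m =>
    simp only [inv_pow, Nat.add_sub_cancel]
    field_simp
    ring


/-- For `N ≥ 0` and `t > 0`:
`(1/log(1+t))^{(N)} = (1/(1+t)^N) Σ_{k=0}^N (-1)^k k! S_1(N,k)/(log(1+t))^{k+1}`. -/
theorem stmt16 (N : ℕ) (t : ℝ) (ht : 0 < t) :
    iteratedDeriv N (fun s : ℝ => 1 / Real.log (1 + s)) t =
      (1 / (1 + t) ^ N) * ∑ k ∈ Finset.range (N + 1),
        (-1 : ℝ) ^ k * k.factorial * stirling1 N k / Real.log (1 + t) ^ (k + 1) := by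
  induction N generalizing t with
  | zero =>
    simp [stirling1, descPochhammer]
  | succ N ih =>
    have h1t : (0:ℝ) < 1 + t := by linarith
    have h1t' : (1:ℝ) + t ≠ 0 := ne_of_gt h1t
    have hL0 : Real.log (1 + t) ≠ 0 := ne_of_gt (Real.log_pos (by linarith))
    rw [iteratedDeriv_succ]
    have hev : iteratedDeriv N (fun s : ℝ => 1 / Real.log (1 + s)) =ᶠ[nhds t]
        (fun s => (1 / (1 + s) ^ N) * ∑ k ∈ Finset.range (N + 1),
          (-1 : ℝ) ^ k * k.factorial * stirling1 N k / Real.log (1 + s) ^ (k + 1)) :=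
      Filter.eventually_of_mem (Ioi_mem_nhds ht) (fun s hs => ih s hs)
    rw [hev.deriv_eq]
    -- set up derivatives
    have h1 : HasDerivAt (fun s : ℝ => 1 + s) 1 t := (hasDerivAt_id t).const_add 1
    have hL : HasDerivAt (fun s : ℝ => Real.log (1 + s)) ((1+t)⁻¹ * 1) t :=
      (Real.hasDerivAt_log h1t').comp t h1
    have hA : HasDerivAt (fun s : ℝ => ((1 + s) ^ N)⁻¹)
        (-(N:ℝ) * 1 * (((1+t))⁻¹)^(N+1)) t := hasDerivAt_inv_pow N h1 h1t'
    have hG : HasDerivAt (fun s : ℝ => ∑ k ∈ Finset.range (N + 1),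
        (-1 : ℝ) ^ k * k.factorial * stirling1 N k * (Real.log (1 + s) ^ (k + 1))⁻¹)
        (∑ k ∈ Finset.range (N + 1), (-1 : ℝ) ^ k * k.factorial * stirling1 N k *
          (-((k:ℝ)+1) * ((1+t)⁻¹ * 1) * ((Real.log (1+t))⁻¹)^(k+2))) t := by
      apply HasDerivAt.fun_sum
      intro k _
      have := (hasDerivAt_inv_pow (k+1) hL hL0).const_mul
        ((-1 : ℝ) ^ k * k.factorial * stirling1 N k)
      refine this.congr_deriv ?_
      push_cast
      ring
    have hprod := hA.fun_mul hG
    have hfun : (fun s : ℝ => (1 / (1 + s) ^ N) * ∑ k ∈ Finset.range (N + 1),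
          (-1 : ℝ) ^ k * k.factorial * stirling1 N k / Real.log (1 + s) ^ (k + 1))
        = fun s : ℝ => ((1 + s) ^ N)⁻¹ * ∑ k ∈ Finset.range (N + 1),
          (-1 : ℝ) ^ k * k.factorial * stirling1 N k * (Real.log (1 + s) ^ (k + 1))⁻¹ := by
      funext s
      simp only [one_div, div_eq_mul_inv, one_mul]
    rw [hfun, hprod.deriv]
    -- now pure algebra
    have htarget : (1 / (1 + t) ^ (N+1)) * ∑ k ∈ Finset.range (N + 1 + 1),
          (-1 : ℝ) ^ k * k.factorial * stirling1 (N+1) k / Real.log (1 + t) ^ (k + 1)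
        = (1 / (1 + t) ^ (N+1)) * ∑ k ∈ Finset.range (N + 1),
          (-1 : ℝ) ^ k * k.factorial * stirling1 N k *
            (-(N:ℝ) * ((Real.log (1+t))⁻¹)^(k+1) - ((k:ℝ)+1) * ((Real.log (1+t))⁻¹)^(k+2)) := by
      rw [← sum_id N (Real.log (1+t))⁻¹]
      congr 1
      apply Finset.sum_congr rfl
      intro j _
      rw [div_eq_mul_inv, inv_pow]
    rw [htarget]
    rw [Finset.mul_sum, Finset.mul_sum, Finset.mul_sum, ← Finset.sum_add_distrib]
    apply Finset.sum_congr rfl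
    intro k _
    simp only [inv_pow, one_div]
    field_simp
    ring
end
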